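/- arXiv:2601.09015 — 8 statements merged into one kernel-verified Lean document; each statement's English description precedes it below -/
import Mathlib

section
/- In the vector lattice c₀₀ of finitely supported real sequences, the set A = { (1/n)e₁ + (1/k)∑_{i=2}^n e_i : n,k ∈ ℕ } does not contain 0 in its relative uniform adherence, but 0 belongs to the second relative uniform adherence of A (hence the uniform adherence of A is not uniformly closed). -/
/-!
A regulator `e ∈ c₀₀` has finite support, so `e i = 0` for some `i ≥ 2`. Along a sequence
`(1/n)e₁ + (1/k)∑_{j=2}^n e_j` in `A` converging relatively uniformly to `0` with regulator `e`,
the `i`-th coordinate is therefore eventually `0`, i.e. `n < i`, while the first coordinate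
`1/n` tends to `0` and so eventually drops below `1/i`.

On the other hand, for fixed `n` the elements of `A` converge to `(1/n)e₁` as `k → ∞` with
regulator `∑_{j=2}^n e_j`, and `(1/n)e₁ → 0` with regulator `e₁`.
-/

open Filter Set

section Defs

variable (X : Type*) [Lattice X] [AddCommGroup X] [Module ℝ X]

/-- Archimedean property for a vector lattice. -/
def VLArchimedean : Prop := ∀ x y : X, (∀ n : ℕ, n • x ≤ y) → x ≤ 0

variable {X}

/-- `Y` is a sublattice: a linear subspace closed under `⊔`. -/
def IsVLSublattice (Y : Set X) : Prop :=
  (0 : X) ∈ Y ∧ (∀ a ∈ Y, ∀ b ∈ Y, a + b ∈ Y) ∧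
    (∀ (c : ℝ), ∀ a ∈ Y, c • a ∈ Y) ∧ (∀ a ∈ Y, ∀ b ∈ Y, a ⊔ b ∈ Y)

/-- `Y` is majorizing in `X`. -/
def Majorizing (Y : Set X) : Prop := ∀ x : X, 0 ≤ x → ∃ y ∈ Y, x ≤ y

/-- Relative uniform convergence of a sequence with regulator `e`. -/
def RUTendsto (x : ℕ → X) (l e : X) : Prop :=
  0 ≤ e ∧ ∀ ε : ℝ, 0 < ε → ∃ N, ∀ n ≥ N, |x n - l| ≤ ε • e

/-- Relative uniform Cauchy sequence with regulator `e`. -/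
def RUCauchy (x : ℕ → X) (e : X) : Prop :=
  0 ≤ e ∧ ∀ ε : ℝ, 0 < ε → ∃ N, ∀ n ≥ N, ∀ m ≥ N, |x n - x m| ≤ ε • e

/-- Relative uniform convergence of a net with regulator `e`. -/
def RUTendstoNet {ι : Type*} [Preorder ι] (x : ι → X) (l e : X) : Prop :=
  0 ≤ e ∧ ∀ ε : ℝ, 0 < ε → ∃ α₀, ∀ α ≥ α₀, |x α - l| ≤ ε • e

/-- Relative uniform Cauchy net with regulator `e`. -/
def RUCauchyNet {ι : Type*} [Preorder ι] (x : ι → X) (e : X) : Prop :=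
  0 ≤ e ∧ ∀ ε : ℝ, 0 < ε → ∃ α₀, ∀ α ≥ α₀, ∀ β ≥ α₀, |x α - x β| ≤ ε • e

/-- Uniform adherence of a set: all relative uniform limits of sequences from `A`. -/
def uAdh (A : Set X) : Set X :=
  {l | ∃ x : ℕ → X, (∀ n, x n ∈ A) ∧ ∃ e, RUTendsto x l e}

/-- `A` is uniformly closed. -/
def RUClosed (A : Set X) : Prop := uAdh A ⊆ A

/-- Uniform closure: the least uniformly closed superset of `A`. -/
def uClosure (A : Set X) : Set X := ⋂₀ {B : Set X | A ⊆ B ∧ RUClosed B}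

variable (X)

/-- Relative uniform completeness (for sequences). -/
def RUComplete : Prop :=
  ∀ x : ℕ → X, (∃ e, RUCauchy x e) → ∃ l e, RUTendsto x l e

variable {X}

/-- Relative uniform completeness of a sublattice `Y` (regulators taken in `Y`). -/
def RUCompleteIn (Y : Set X) : Prop :=
  ∀ x : ℕ → X, (∀ n, x n ∈ Y) → (∃ e ∈ Y, RUCauchy x e) →
    ∃ l ∈ Y, ∃ e ∈ Y, RUTendsto x l e

/-- An (order) ideal of a vector lattice: a solid linear subspace. -/
def IsVLIdeal (I : Set X) : Prop :=
  (0 : X) ∈ I ∧ (∀ a ∈ I, ∀ b ∈ I, a + b ∈ I) ∧ (∀ (c : ℝ), ∀ a ∈ I, c • a ∈ I) ∧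
    ∀ x : X, ∀ y ∈ I, |x| ≤ |y| → x ∈ I

/-- The ideal generated by a set. -/
def idealGen (Y : Set X) : Set X := ⋂₀ {I : Set X | Y ⊆ I ∧ IsVLIdeal I}

/-- `B` is a projection band: an ideal along which the space decomposes. -/
def IsProjectionBand (B : Set X) : Prop :=
  IsVLIdeal B ∧ ∀ x : X, ∃ b ∈ B, ∃ d : X, (∀ y ∈ B, |d| ⊓ |y| = 0) ∧ x = b + d

end Defs
/-- The set `A = { (1/n)e₁ + (1/k)∑_{i=2}^n e_i : n,k ≥ 1 }` in `c₀₀ = ℕ →₀ ℝ`. -/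
noncomputable def c00A : Set (ℕ →₀ ℝ) :=
  {f | ∃ n k : ℕ, 1 ≤ n ∧ 1 ≤ k ∧
    f = (1 / (n : ℝ)) • Finsupp.single 1 (1 : ℝ) +
        (1 / (k : ℝ)) • ∑ i ∈ Finset.Icc 2 n, Finsupp.single i (1 : ℝ)}

open Topology

section RUTendsto

variable {X : Type*} [Lattice X] [AddCommGroup X] [Module ℝ X] [SMulPosMono ℝ X]

theorem ruTendsto_add_smul {c : ℕ → ℝ} (hc : Tendsto c atTop (𝓝 0)) (a : X) {u : X}
    (hu : 0 ≤ u) : RUTendsto (fun m => a + c m • u) a u := by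
  refine ⟨hu, fun ε hε => ?_⟩
  obtain ⟨N, hN⟩ := Metric.tendsto_atTop.mp hc ε hε
  refine ⟨N, fun m hm => ?_⟩
  have hcm : |c m| < ε := by simpa using hN m hm
  rw [add_sub_cancel_left, abs_le', ← neg_smul]
  exact ⟨smul_le_smul_of_nonneg_right (le_abs_self _ |>.trans hcm.le) hu,
    smul_le_smul_of_nonneg_right (neg_le_abs _ |>.trans hcm.le) hu⟩

end RUTendsto

namespace RUTendsto

variable {ι : Type*} {x : ℕ → ι →₀ ℝ} {l e : ι →₀ ℝ}

theorem exists_abs_apply_sub_le (h : RUTendsto x l e) (i : ι) {ε : ℝ} (hε : 0 < ε) :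
    ∃ N, ∀ m ≥ N, |x m i - l i| ≤ ε * e i := by
  obtain ⟨N, hN⟩ := h.2 ε hε
  exact ⟨N, fun m hm => by simpa [abs, Finsupp.sup_apply] using Finsupp.le_def.mp (hN m hm) i⟩

theorem tendsto_apply (h : RUTendsto x l e) (i : ι) :
    Tendsto (fun m => x m i) atTop (𝓝 (l i)) := by
  have hei : 0 ≤ e i := Finsupp.le_def.mp h.1 i
  refine Metric.tendsto_atTop.mpr fun δ hδ => ?_
  obtain ⟨N, hN⟩ := h.exists_abs_apply_sub_le i (show 0 < δ / (e i + 1) by positivity)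
  refine ⟨N, fun m hm => (hN m hm).trans_lt ?_⟩
  rw [div_mul_eq_mul_div, div_lt_iff₀ (by positivity)]
  nlinarith

theorem eventually_apply_eq (h : RUTendsto x l e) {i : ι} (hei : e i = 0) :
    ∀ᶠ m in atTop, x m i = l i := by
  obtain ⟨N, hN⟩ := h.exists_abs_apply_sub_le i one_pos
  exact eventually_atTop.mpr ⟨N, fun m hm => by simpa [hei, sub_eq_zero] using hN m hm⟩

end RUTendsto

theorem one_div_lt_apply_one_of_apply_eq_zero {f : ℕ →₀ ℝ} (hf : f ∈ c00A) {i : ℕ}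
    (hi : 2 ≤ i) (hfi : f i = 0) : 1 / (i : ℝ) < f 1 := by
  obtain ⟨n, k, hn, hk, rfl⟩ := hf
  have hni : n < i := by
    by_contra! hin
    simp [Finsupp.single_apply, show 1 ≠ i by omega, show k ≠ 0 by omega, hi, hin] at hfi
  have hn0 : (0 : ℝ) < n := by exact_mod_cast hn
  simpa [Finsupp.single_apply] using one_div_lt_one_div_of_lt hn0 (by exact_mod_cast hni)

theorem zero_notMem_uAdh_c00A : (0 : ℕ →₀ ℝ) ∉ uAdh c00A := by
  rintro ⟨x, hxA, e, hx⟩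
  obtain ⟨i, hi⟩ := Infinite.exists_notMem_finset (e.support ∪ {0, 1})
  simp only [Finset.mem_union, Finsupp.mem_support_iff, Finset.mem_insert,
    Finset.mem_singleton, not_or, not_not] at hi
  obtain ⟨hei, hi0, hi1⟩ := hi
  have hsmall : ∀ᶠ m in atTop, x m 1 < 1 / i :=
    (hx.tendsto_apply 1).eventually (gt_mem_nhds (by simp; positivity))
  obtain ⟨m, hm1, hmi⟩ := (hsmall.and (hx.eventually_apply_eq hei)).exists
  exact hm1.not_gt (one_div_lt_apply_one_of_apply_eq_zero (hxA m) (by omega) hmi)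

theorem smul_single_one_mem_uAdh_c00A {n : ℕ} (hn : 1 ≤ n) :
    (1 / (n : ℝ)) • Finsupp.single 1 (1 : ℝ) ∈ uAdh c00A :=
  ⟨_, fun k => ⟨n, k + 1, hn, by omega, by push_cast; rfl⟩,
    _, ruTendsto_add_smul tendsto_one_div_add_atTop_nhds_zero_nat _
      (Finset.sum_nonneg fun _ _ => Finsupp.single_nonneg.mpr zero_le_one)⟩

theorem zero_mem_uAdh_uAdh_c00A : (0 : ℕ →₀ ℝ) ∈ uAdh (uAdh c00A) := by
  have he₁ : (0 : ℕ →₀ ℝ) ≤ Finsupp.single 1 1 := Finsupp.single_nonneg.mpr zero_le_one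
  refine ⟨_, fun m => ?_, _, ruTendsto_add_smul tendsto_one_div_add_atTop_nhds_zero_nat 0 he₁⟩
  simpa using smul_single_one_mem_uAdh_c00A (n := m + 1) (by omega)

theorem zero_not_in_adherence_but_in_second_adherence :
    (0 : ℕ →₀ ℝ) ∉ uAdh c00A ∧ (0 : ℕ →₀ ℝ) ∈ uAdh (uAdh c00A) ∧
      ¬ RUClosed (uAdh c00A) :=
  ⟨zero_notMem_uAdh_c00A, zero_mem_uAdh_uAdh_c00A,
    fun h => zero_notMem_uAdh_c00A (h zero_mem_uAdh_uAdh_c00A)⟩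
end

section
/- Let Y be a majorizing sublattice of an Archimedean vector lattice X. Then every 0 ≤ x in the relative uniform adherence of Y in X can be written as the supremum in X, and the relative uniform limit, of an increasing sequence in Y₊. -/
/-!
Since `Y` is majorizing, the regulator of a sequence `z k ∈ Y` converging to `x` may be taken to
be some `u ∈ Y`, and after passing to a subsequence `|z k - x| ≤ u / (k + 1)`. Then
`v k = (z k - u / (k + 1)) ⊔ 0` lies in `Y`, satisfies `0 ≤ v k ≤ x` and `x - v k ≤ 2 u / (k + 1)`,
and so do its partial suprema, which increase to `x` uniformly with regulator `u`. By the
Archimedean property, a sequence below `x` converging uniformly to `x` has supremum `x`.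
-/

open Filter Set

open Topology

section LatticeOrderedGroup

variable {X : Type*} [Lattice X] [AddCommGroup X] [CovariantClass X X (· + ·) (· ≤ ·)]
  {a d x : X}

theorem sub_sup_zero_le_of_abs_sub_le (h : |a - x| ≤ d) (hx : 0 ≤ x) : (a - d) ⊔ 0 ≤ x :=
  sup_le (sub_le_comm.1 ((le_abs_self _).trans h)) hx

theorem sub_sub_sup_zero_le_of_abs_sub_le (h : |a - x| ≤ d) : x - (a - d) ⊔ 0 ≤ d + d :=
  calc x - (a - d) ⊔ 0 ≤ x - (a - d) := sub_le_sub_left le_sup_left x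
    _ = (x - a) + d := by abel
    _ ≤ d + d := add_le_add_left ((abs_sub_comm a x ▸ le_abs_self (x - a)).trans h) d

end LatticeOrderedGroup

section RieszSpace

variable {X : Type*} [Lattice X] [AddCommGroup X] [Module ℝ X] [PosSMulMono ℝ X]

theorem VLArchimedean.nonpos_of_forall_le_smul (harch : VLArchimedean X) {a u : X}
    (hu : 0 ≤ u) (h : ∀ ε : ℝ, 0 < ε → a ≤ ε • u) : a ≤ 0 := by
  refine harch a u fun n => ?_
  rcases Nat.eq_zero_or_pos n with rfl | hn
  · simpa using hu
  have hn' : (0 : ℝ) < n := Nat.cast_pos.2 hn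
  calc n • a = (n : ℝ) • a := (Nat.cast_smul_eq_nsmul ℝ n a).symm
    _ ≤ (n : ℝ) • ((n : ℝ)⁻¹ • u) := smul_le_smul_of_nonneg_left (h _ (inv_pos.2 hn')) hn'.le
    _ = u := smul_inv_smul₀ hn'.ne' u

theorem RUTendsto.mono_regulator {z : ℕ → X} {x e u : X} (h : RUTendsto z x e) (he : e ≤ u) :
    RUTendsto z x u :=
  ⟨h.1.trans he, fun ε hε => (h.2 ε hε).imp fun _ hN n hn =>
    (hN n hn).trans (smul_le_smul_of_nonneg_left he hε.le)⟩

variable [CovariantClass X X (· + ·) (· ≤ ·)]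

theorem smul_le_smul_of_le_of_nonneg {c c' : ℝ} {u : X} (hc : c ≤ c') (hu : 0 ≤ u) :
    c • u ≤ c' • u :=
  haveI : IsOrderedAddMonoid X := { add_le_add_left := fun _ _ h c => add_le_add_left h c }
  smul_le_smul_of_nonneg_right hc hu

theorem RUTendsto.isLUB_range (harch : VLArchimedean X) {w : ℕ → X} {x e : X}
    (h : RUTendsto w x e) (hw : ∀ k, w k ≤ x) : IsLUB (range w) x := by
  refine ⟨forall_mem_range.2 hw, fun b hb => sub_nonpos.1 ?_⟩
  refine harch.nonpos_of_forall_le_smul h.1 fun ε hε => ?_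
  obtain ⟨N, hN⟩ := h.2 ε hε
  calc x - b ≤ x - w N := sub_le_sub_left (hb (mem_range_self N)) x
    _ ≤ |w N - x| := abs_sub_comm (w N) x ▸ le_abs_self _
    _ ≤ ε • e := hN N le_rfl

theorem ruTendsto_of_sub_le_smul {w : ℕ → X} {c : ℕ → ℝ} {x u : X} (hu : 0 ≤ u)
    (hw : ∀ k, w k ≤ x) (hc : Tendsto c atTop (𝓝 0)) (h : ∀ k, x - w k ≤ c k • u) :
    RUTendsto w x u := by
  refine ⟨hu, fun ε hε => ?_⟩
  obtain ⟨N, hN⟩ := eventually_atTop.1 (hc.eventually (ge_mem_nhds hε))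
  refine ⟨N, fun n hn => ?_⟩
  rw [abs_of_nonpos (sub_nonpos.2 (hw n)), neg_sub]
  exact (h n).trans (smul_le_smul_of_le_of_nonneg (hN n hn) hu)

end RieszSpace

namespace IsVLSublattice

variable {X : Type*} [Lattice X] [AddCommGroup X] [Module ℝ X] {Y : Set X}

theorem zero_mem (hY : IsVLSublattice Y) : (0 : X) ∈ Y := hY.1

theorem smul_mem (hY : IsVLSublattice Y) (c : ℝ) {a : X} (ha : a ∈ Y) : c • a ∈ Y :=
  hY.2.2.1 c a ha

theorem sub_mem (hY : IsVLSublattice Y) {a b : X} (ha : a ∈ Y) (hb : b ∈ Y) : a - b ∈ Y := by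
  simpa [sub_eq_add_neg] using hY.2.1 a ha _ (hY.smul_mem (-1) hb)

theorem sup_mem (hY : IsVLSublattice Y) {a b : X} (ha : a ∈ Y) (hb : b ∈ Y) : a ⊔ b ∈ Y :=
  hY.2.2.2 a ha b hb

theorem partialSups_mem (hY : IsVLSublattice Y) {v : ℕ → X} (hv : ∀ k, v k ∈ Y) (k : ℕ) :
    partialSups v k ∈ Y := by
  induction k with
  | zero => simpa using hv 0
  | succ k ih => simpa [partialSups_succ] using hY.sup_mem ih (hv (k + 1))

end IsVLSublattice

theorem adherence_of_majorizing_sublattice_increasing_sup_and_limit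
    {X : Type*} [Lattice X] [AddCommGroup X] [Module ℝ X]
    [CovariantClass X X (· + ·) (· ≤ ·)] [PosSMulMono ℝ X]
    (harch : VLArchimedean X)
    {Y : Set X} (hY : IsVLSublattice Y) (hmaj : Majorizing Y)
    {x : X} (hx0 : 0 ≤ x) (hx : x ∈ uAdh Y) :
    ∃ y : ℕ → X, (∀ n, y n ∈ Y) ∧ (∀ n, 0 ≤ y n) ∧ Monotone y ∧
      IsLUB (Set.range y) x ∧ ∃ e, RUTendsto y x e := by
  obtain ⟨z, hzY, e, hz⟩ := hx
  obtain ⟨u, huY, heu⟩ := hmaj e hz.1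
  have hu : RUTendsto z x u := hz.mono_regulator heu
  choose g hg using fun k : ℕ => hu.2 (1 / (k + 1)) (by positivity)
  set v : ℕ → X := fun k => (z (g k) - (1 / (k + 1) : ℝ) • u) ⊔ 0
  have hvY : ∀ k, v k ∈ Y := fun k =>
    hY.sup_mem (hY.sub_mem (hzY _) (hY.smul_mem _ huY)) hY.zero_mem
  have hvx : ∀ k, v k ≤ x := fun k => sub_sup_zero_le_of_abs_sub_le (hg k _ le_rfl) hx0
  have hxv : ∀ k, x - v k ≤ (1 / (k + 1) + 1 / (k + 1) : ℝ) • u := fun k => by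
    rw [add_smul]; exact sub_sub_sup_zero_le_of_abs_sub_le (hg k _ le_rfl)
  have hc : Tendsto (fun k : ℕ => (1 / (k + 1) + 1 / (k + 1) : ℝ)) atTop (𝓝 0) := by
    simpa using (tendsto_one_div_add_atTop_nhds_zero_nat (𝕜 := ℝ)).add
      tendsto_one_div_add_atTop_nhds_zero_nat
  have hwx : ∀ k, partialSups v k ≤ x := fun k => partialSups_le _ _ _ fun j _ => hvx j
  have hw : RUTendsto (partialSups v) x u := ruTendsto_of_sub_le_smul hu.1 hwx hc
    fun k => (sub_le_sub_left (le_partialSups v k) x).trans (hxv k)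
  exact ⟨partialSups v, hY.partialSups_mem hvY, fun k => le_sup_right.trans (le_partialSups v k),
    (partialSups v).monotone, hw.isLUB_range harch hwx, u, hw⟩
end

section
/- Let Y be a majorizing sublattice of an Archimedean vector lattice X. Then every 0 ≤ x in the relative uniform closure of Y in X is the supremum in X of an increasing sequence in Y₊; in particular Y is super order dense in its uniform closure. -/
open Filter Set

/-! The suprema of countable nonempty subsets of `Y` form a uniformly closed set containing `Y`,
hence containing its uniform closure. For closedness, let `l` be the uniform limit of such
suprema `a_k = sup S_k`; since `Y` is majorizing, the regulator may be taken to be some `f ∈ Y`,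
with `|a_k - l| ≤ f / (k + 1)`. The shifted sets `S_k - f / (k + 1) ⊆ Y` have suprema below `l`
and within `2 f / (k + 1)` of it, so by the Archimedean property `l` is the supremum of their
countable union. Finally, if `x ≥ 0` is the supremum of `{s_n} ⊆ Y`, the running suprema of
`s_n ⊔ 0` form an increasing sequence in `Y₊` with supremum `x`. -/

lemma SupClosed.partialSups_mem {α : Type*} [SemilatticeSup α] {Y : Set α} (hY : SupClosed Y)
    {v : ℕ → α} (hv : ∀ n, v n ∈ Y) (n : ℕ) : partialSups v n ∈ Y :=
  hY.finsetSup'_mem Finset.nonempty_Iic fun i _ ↦ hv i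

lemma IsLUB.range_sup_const {α ι : Type*} [SemilatticeSup α] {v : ι → α} {x c : α}
    (h : IsLUB (range v) x) (hc : c ≤ x) : IsLUB (range fun i ↦ v i ⊔ c) x :=
  ⟨forall_mem_range.2 fun i ↦ sup_le (h.1 ⟨i, rfl⟩) hc,
    fun _ hu ↦ h.2 <| forall_mem_range.2 fun i ↦ le_sup_left.trans (hu ⟨i, rfl⟩)⟩

def countableSups {X : Type*} [Preorder X] (Y : Set X) : Set X :=
  {z | ∃ S ⊆ Y, S.Countable ∧ S.Nonempty ∧ IsLUB S z}

lemma subset_countableSups {X : Type*} [Preorder X] (Y : Set X) : Y ⊆ countableSups Y :=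
  fun y hy ↦ ⟨{y}, singleton_subset_iff.2 hy, countable_singleton y, singleton_nonempty y,
    isLUB_singleton⟩

section VectorLattice

variable {X : Type*} [Lattice X] [AddCommGroup X] [Module ℝ X]

lemma uClosure_subset {A B : Set X} (hAB : A ⊆ B) (hB : RUClosed B) : uClosure A ⊆ B :=
  sInter_subset_of_mem ⟨hAB, hB⟩

lemma IsVLSublattice.supClosed {Y : Set X} (hY : IsVLSublattice Y) : SupClosed Y :=
  fun _ ha _ hb ↦ hY.2.2.2 _ ha _ hb

lemma IsVLSublattice.sub_smul_mem {Y : Set X} (hY : IsVLSublattice Y) {a b : X} (ha : a ∈ Y)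
    (c : ℝ) (hb : b ∈ Y) : a - c • b ∈ Y := by
  simpa [sub_eq_add_neg, neg_smul] using hY.2.1 a ha _ (hY.2.2.1 (-c) b hb)

variable [PosSMulMono ℝ X]

lemma VLArchimedean.nonpos_of_forall_le_inv_smul (harch : VLArchimedean X) {z f : X}
    (h : ∀ n : ℕ, z ≤ ((n : ℝ) + 1)⁻¹ • f) : z ≤ 0 := by
  refine harch z (f ⊔ 0) ?_
  rintro (_ | n)
  · simp
  calc (n + 1) • z = ((n : ℝ) + 1) • z := by norm_cast
    _ ≤ ((n : ℝ) + 1) • ((n : ℝ) + 1)⁻¹ • f := smul_le_smul_of_nonneg_left (h n) (by positivity)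
    _ = f := smul_inv_smul₀ (by positivity) f
    _ ≤ f ⊔ 0 := le_sup_left

lemma exists_abs_sub_le_of_mem_uAdh {A Y : Set X} (hmaj : Majorizing Y) {l : X}
    (hl : l ∈ uAdh A) :
    ∃ f ∈ Y, ∃ a : ℕ → X, (∀ k, a k ∈ A) ∧ ∀ k, |a k - l| ≤ ((k : ℝ) + 1)⁻¹ • f := by
  obtain ⟨x, hxA, e, he, hconv⟩ := hl
  obtain ⟨f, hfY, hef⟩ := hmaj e he
  choose N hN using fun k : ℕ ↦ hconv ((k : ℝ) + 1)⁻¹ (by positivity)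
  exact ⟨f, hfY, fun k ↦ x (N k), fun k ↦ hxA _,
    fun k ↦ (hN k _ le_rfl).trans (smul_le_smul_of_nonneg_left hef (by positivity))⟩

variable [CovariantClass X X (· + ·) (· ≤ ·)]

lemma VLArchimedean.isLUB_range (harch : VLArchimedean X) {b : ℕ → X} {l f : X}
    (hb : ∀ n, b n ≤ l) (hlb : ∀ n, l - b n ≤ ((n : ℝ) + 1)⁻¹ • f) : IsLUB (range b) l :=
  ⟨forall_mem_range.2 hb, fun _ hu ↦ sub_nonpos.1 <| harch.nonpos_of_forall_le_inv_smul
    fun n ↦ (sub_le_sub_left (hu ⟨n, rfl⟩) l).trans (hlb n)⟩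

lemma ruClosed_countableSups (harch : VLArchimedean X) {Y : Set X} (hY : IsVLSublattice Y)
    (hmaj : Majorizing Y) : RUClosed (countableSups Y) := by
  intro l hl
  obtain ⟨f, hfY, a, ha, hal⟩ := exists_abs_sub_le_of_mem_uAdh hmaj hl
  choose S hSY hSc hSne hSa using ha
  set ε : ℕ → ℝ := fun k ↦ ((k : ℝ) + 1)⁻¹
  refine ⟨⋃ k, (· - ε k • f) '' S k,
    iUnion_subset fun k ↦ image_subset_iff.2 fun s hs ↦ hY.sub_smul_mem (hSY k hs) _ hfY,
    countable_iUnion fun k ↦ (hSc k).image _, nonempty_iUnion.2 ⟨0, (hSne 0).image _⟩, ?_⟩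
  have hlub : ∀ k, IsLUB ((· - ε k • f) '' S k) (a k - ε k • f) :=
    fun k ↦ (OrderIso.subRight (ε k • f)).isLUB_image'.2 (hSa k)
  refine (isLUB_iUnion_iff_of_isLUB hlub l).1 <|
    harch.isLUB_range (f := f + f) (fun k ↦ ?_) fun k ↦ ?_
  · exact sub_le_comm.1 ((le_abs_self _).trans (hal k))
  · have hla : l - a k ≤ ε k • f := by
      simpa using (neg_le_abs (a k - l)).trans (hal k)
    calc l - (a k - ε k • f) = (l - a k) + ε k • f := by abel
      _ ≤ ε k • f + ε k • f := add_le_add_left hla _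
      _ = ε k • (f + f) := (smul_add _ _ _).symm

end VectorLattice

theorem closure_of_majorizing_sublattice_increasing_sup
    {X : Type*} [Lattice X] [AddCommGroup X] [Module ℝ X]
    [CovariantClass X X (· + ·) (· ≤ ·)] [PosSMulMono ℝ X]
    (harch : VLArchimedean X)
    {Y : Set X} (hY : IsVLSublattice Y) (hmaj : Majorizing Y)
    {x : X} (hx0 : 0 ≤ x) (hx : x ∈ uClosure Y) :
    ∃ y : ℕ → X, (∀ n, y n ∈ Y) ∧ (∀ n, 0 ≤ y n) ∧ Monotone y ∧
      IsLUB (Set.range y) x := by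
  obtain ⟨S, hSY, hSc, hSne, hSx⟩ :=
    uClosure_subset (subset_countableSups Y) (ruClosed_countableSups harch hY hmaj) hx
  obtain ⟨v, rfl⟩ := hSc.exists_eq_range hSne
  have hv0 : ∀ n, v n ⊔ 0 ∈ Y := fun n ↦ hY.supClosed (hSY ⟨n, rfl⟩) hY.1
  refine ⟨partialSups fun n ↦ v n ⊔ 0, hY.supClosed.partialSups_mem hv0,
    fun n ↦ le_sup_right.trans (le_partialSups (fun n ↦ v n ⊔ 0) n), (partialSups _).monotone, ?_⟩
  rw [isLUB_congr (upperBounds_range_partialSups _)]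
  exact hSx.range_sup_const hx0
end

section
/- Let X be a relatively uniformly complete Archimedean vector lattice, Y a sublattice, and (x_k) a sequence in Y converging relatively uniformly in X to some x ∈ X. Then x lies in the uniform adherence A of Y in X, and x_k → x relatively uniformly in A (i.e., with a regulator belonging to A). -/
open Filter Set

/-! Pass to a subsequence `n` with `|x m - l| ≤ (4⁻ᵏ / 2) • e` for `m ≥ n k`. The oscillations
`b k` of `x` on the blocks `[n k, n (k + 1)]` are finite suprema of elements of `Y`, hence in `Y`,
and `b k ≤ 4⁻ᵏ • e`. So the partial sums of `∑ 2ᵏ • b k` lie in `Y` and form a relatively uniform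
Cauchy sequence; by completeness they converge to some `u`, which lies in the uniform adherence of
`Y` (being a limit of elements of `Y` itself: the adherence need not be uniformly closed) and, the
partial sums being increasing, dominates every `2ᵏ • b k`. Thus `x` oscillates by at
most `2⁻ᵏ • u` on the `k`-th block; telescoping along `n` and the Archimedean property give
`|x (n k) - l| ≤ 2 • 2⁻ᵏ • u`, and so `|x m - l| ≤ 3 • 2⁻ᵏ • u` on that block. -/

open Topology

section
variable {X : Type*} [Lattice X] [AddCommGroup X] [CovariantClass X X (· + ·) (· ≤ ·)]

theorem isOrderedAddMonoid_of_addLeftMono : IsOrderedAddMonoid X where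
  add_le_add_left _ _ h c := add_le_add_left h c

theorem abs_sub_le_abs_sub_add_abs_sub (a b c : X) : |a - c| ≤ |a - b| + |b - c| := by
  simpa using abs_add_le (a - b) (b - c)

end

attribute [local instance] isOrderedAddMonoid_of_addLeftMono

theorem tendsto_const_mul_half_pow (C : ℝ) :
    Tendsto (fun k : ℕ => C * (1 / 2 : ℝ) ^ k) atTop (𝓝 0) := by
  simpa using (tendsto_pow_atTop_nhds_zero_of_lt_one (r := (1 / 2 : ℝ)) (by norm_num)
    (by norm_num)).const_mul C

theorem StrictMono.exists_le_lt_succ {n : ℕ → ℕ} (hn : StrictMono n) {K m : ℕ} (hm : n K ≤ m) :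
    ∃ k ≥ K, n k ≤ m ∧ m < n (k + 1) := by
  induction m, hm using Nat.le_induction with
  | base => exact ⟨K, le_rfl, le_rfl, hn K.lt_succ_self⟩
  | succ m _ ih =>
    obtain ⟨k, hKk, hkm, hmk⟩ := ih
    rcases (show m + 1 ≤ n (k + 1) from hmk).eq_or_lt with h | h
    · exact ⟨k + 1, by omega, h.ge, by rw [h]; exact hn (k + 1).lt_succ_self⟩
    · exact ⟨k, hKk, by omega, h⟩

section
variable {X : Type*} [Lattice X] [AddCommGroup X] [Module ℝ X]

def IsVLSublattice.toSubmodule {Y : Set X} (hY : IsVLSublattice Y) : Submodule ℝ X where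
  carrier := Y
  zero_mem' := hY.1
  add_mem' ha hb := hY.2.1 _ ha _ hb
  smul_mem' c _ ha := hY.2.2.1 c _ ha

theorem IsVLSublattice.abs_mem {Y : Set X} (hY : IsVLSublattice Y) {a : X} (ha : a ∈ Y) :
    |a| ∈ Y :=
  hY.2.2.2 a ha (-a) (hY.toSubmodule.neg_mem ha)

theorem RUTendsto.comp_strictMono {x : ℕ → X} {l e : X} (hx : RUTendsto x l e) {n : ℕ → ℕ}
    (hn : StrictMono n) : RUTendsto (x ∘ n) l e := by
  refine ⟨hx.1, fun ε hε => ?_⟩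
  obtain ⟨N, hN⟩ := hx.2 ε hε
  exact ⟨N, fun k hk => hN (n k) (hk.trans (hn.id_le k))⟩

theorem RUTendsto.exists_strictMono_oscillation_le [CovariantClass X X (· + ·) (· ≤ ·)]
    {Y : Set X} (hY : IsVLSublattice Y) {x : ℕ → X} (hx : ∀ m, x m ∈ Y) {l e : X}
    (h : RUTendsto x l e) :
    ∃ n : ℕ → ℕ, StrictMono n ∧ ∃ b : ℕ → X, (∀ k, b k ∈ Y) ∧
      (∀ k, b k ≤ (1 / 4 : ℝ) ^ k • e) ∧
      ∀ k m, n k ≤ m → m ≤ n (k + 1) → |x m - x (n k)| ≤ b k := by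
  obtain ⟨n, hn, hnl⟩ := extraction_forall_of_eventually
    (P := fun k N => ∀ m ≥ N, |x m - l| ≤ ((1 / 4 : ℝ) ^ k / 2) • e) fun k => by
      obtain ⟨N, hN⟩ := h.2 _ (by positivity : (0 : ℝ) < (1 / 4) ^ k / 2)
      exact eventually_atTop.2 ⟨N, fun N' hN' m hm => hN m (hN'.trans hm)⟩
  have hne : ∀ k, (Finset.Icc (n k) (n (k + 1))).Nonempty := fun k =>
    Finset.nonempty_Icc.2 (hn.monotone k.le_succ)
  refine ⟨n, hn, fun k => (Finset.Icc (n k) (n (k + 1))).sup' (hne k) fun m => |x m - x (n k)|,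
    fun k => Finset.sup'_mem _ hY.2.2.2 _ _ _ fun m _ =>
      hY.abs_mem (hY.toSubmodule.sub_mem (hx m) (hx _)),
    fun k => Finset.sup'_le _ _ fun m hm => ?_,
    fun k m hkm hmk => Finset.le_sup' (fun m => |x m - x (n k)|) (Finset.mem_Icc.2 ⟨hkm, hmk⟩)⟩
  calc |x m - x (n k)| ≤ |x m - l| + |l - x (n k)| := abs_sub_le_abs_sub_add_abs_sub _ _ _
    _ ≤ ((1 / 4 : ℝ) ^ k / 2) • e + ((1 / 4 : ℝ) ^ k / 2) • e :=
        add_le_add (hnl k m (Finset.mem_Icc.1 hm).1) (by rw [abs_sub_comm]; exact hnl k _ le_rfl)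
    _ = (1 / 4 : ℝ) ^ k • e := by rw [← add_smul, add_halves]

end

section
variable {X : Type*} [Lattice X] [AddCommGroup X] [Module ℝ X]
  [CovariantClass X X (· + ·) (· ≤ ·)] [PosSMulMono ℝ X]

theorem le_of_forall_le_add_smul (harch : VLArchimedean X) {a b f : X} (hf : 0 ≤ f)
    (h : ∀ ε : ℝ, 0 < ε → a ≤ b + ε • f) : a ≤ b := by
  refine sub_nonpos.1 (harch _ f fun n => ?_)
  rcases n.eq_zero_or_pos with rfl | hn
  · simpa using hf
  · have := smul_le_smul_of_nonneg_left (sub_le_iff_le_add'.2 (h (1 / n) (by positivity)))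
      (n.cast_nonneg : (0 : ℝ) ≤ n)
    rwa [smul_smul, mul_one_div_cancel (by positivity), one_smul, Nat.cast_smul_eq_nsmul] at this

theorem abs_sub_le_of_abs_sub_succ_le_geometric_two {y : ℕ → X} {u : X} (hu : 0 ≤ u)
    (h : ∀ k, |y (k + 1) - y k| ≤ (1 / 2 : ℝ) ^ k • u) {k j : ℕ} (hkj : k ≤ j) :
    |y k - y j| ≤ (2 * (1 / 2 : ℝ) ^ k) • u := by
  have telescope : ∀ i, |y k - y (k + i)| ≤ (2 * (1 / 2 : ℝ) ^ k - 2 * (1 / 2) ^ (k + i)) • u := by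
    intro i
    induction i with
    | zero => simp
    | succ i ih =>
      calc |y k - y (k + (i + 1))| ≤ |y k - y (k + i)| + |y (k + i) - y (k + i + 1)| :=
            abs_sub_le_abs_sub_add_abs_sub _ _ _
        _ ≤ (2 * (1 / 2 : ℝ) ^ k - 2 * (1 / 2) ^ (k + i)) • u + (1 / 2 : ℝ) ^ (k + i) • u :=
            add_le_add ih (by rw [abs_sub_comm]; exact h _)
        _ = (2 * (1 / 2 : ℝ) ^ k - 2 * (1 / 2) ^ (k + (i + 1))) • u := by
            rw [← add_smul]; ring_nf
  obtain ⟨i, rfl⟩ := Nat.exists_eq_add_of_le hkj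
  exact (telescope i).trans <| smul_le_smul_of_nonneg_right
    (by linarith [pow_pos (one_half_pos (α := ℝ)) (k + i)]) hu

theorem ruCauchy_of_abs_sub_succ_le_geometric_two {y : ℕ → X} {u : X} (hu : 0 ≤ u)
    (h : ∀ k, |y (k + 1) - y k| ≤ (1 / 2 : ℝ) ^ k • u) : RUCauchy y u := by
  refine ⟨hu, fun ε hε => ?_⟩
  obtain ⟨N, hN⟩ := eventually_atTop.1 ((tendsto_const_mul_half_pow 2).eventually (ge_mem_nhds hε))
  refine ⟨N, fun p hp q hq => ?_⟩
  wlog hpq : p ≤ q generalizing p q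
  · rw [abs_sub_comm]; exact this q hq p hp (le_of_not_ge hpq)
  exact (abs_sub_le_of_abs_sub_succ_le_geometric_two hu h hpq).trans
    (smul_le_smul_of_nonneg_right (hN p hp) hu)

theorem abs_sub_le_of_ruTendsto_of_abs_sub_succ_le_geometric_two (harch : VLArchimedean X)
    {y : ℕ → X} {l e u : X} (hy : RUTendsto y l e) (hu : 0 ≤ u)
    (h : ∀ k, |y (k + 1) - y k| ≤ (1 / 2 : ℝ) ^ k • u) (k : ℕ) :
    |y k - l| ≤ (2 * (1 / 2 : ℝ) ^ k) • u := by
  refine le_of_forall_le_add_smul harch hy.1 fun ε hε => ?_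
  obtain ⟨N, hN⟩ := hy.2 ε hε
  calc |y k - l| ≤ |y k - y (max k N)| + |y (max k N) - l| := abs_sub_le_abs_sub_add_abs_sub _ _ _
    _ ≤ _ := add_le_add (abs_sub_le_of_abs_sub_succ_le_geometric_two hu h (le_max_left _ _))
        (hN _ (le_max_right _ _))

theorem Monotone.le_of_ruTendsto (harch : VLArchimedean X) {y : ℕ → X} {l e : X}
    (hy : Monotone y) (hl : RUTendsto y l e) (m : ℕ) : y m ≤ l := by
  refine le_of_forall_le_add_smul harch hl.1 fun ε hε => ?_
  obtain ⟨N, hN⟩ := hl.2 ε hε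
  calc y m ≤ y (max m N) := hy (le_max_left _ _)
    _ ≤ l + |y (max m N) - l| := sub_le_iff_le_add'.1 (le_abs_self _)
    _ ≤ l + ε • e := add_le_add_right (hN _ (le_max_right _ _)) l

theorem RUTendsto.of_forall_le_lt_succ {x : ℕ → X} {l u : X} {n : ℕ → ℕ} {c : ℕ → ℝ}
    (hu : 0 ≤ u) (hn : StrictMono n) (hc : Tendsto c atTop (𝓝 0))
    (h : ∀ k m, n k ≤ m → m < n (k + 1) → |x m - l| ≤ c k • u) : RUTendsto x l u := by
  refine ⟨hu, fun ε hε => ?_⟩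
  obtain ⟨K, hK⟩ := eventually_atTop.1 (hc.eventually (ge_mem_nhds hε))
  refine ⟨n K, fun m hm => ?_⟩
  obtain ⟨k, hKk, hkm, hmk⟩ := hn.exists_le_lt_succ hm
  exact (h k m hkm hmk).trans (smul_le_smul_of_nonneg_right (hK k hKk) hu)

theorem IsVLSublattice.exists_mem_uAdh_forall_le_half_pow_smul (harch : VLArchimedean X)
    (hcomp : RUComplete X) {Y : Set X} (hY : IsVLSublattice Y) {b : ℕ → X} {e : X} (he : 0 ≤ e)
    (hbY : ∀ k, b k ∈ Y) (hb0 : ∀ k, 0 ≤ b k) (hbe : ∀ k, b k ≤ (1 / 4 : ℝ) ^ k • e) :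
    ∃ u ∈ uAdh Y, ∀ k, b k ≤ (1 / 2 : ℝ) ^ k • u := by
  set s : ℕ → X := fun m => ∑ k ∈ Finset.range m, (2 : ℝ) ^ k • b k
  have hstep : ∀ k, s (k + 1) - s k = (2 : ℝ) ^ k • b k := fun k => by
    simp [s, Finset.sum_range_succ]
  have hterm0 : ∀ k, 0 ≤ (2 : ℝ) ^ k • b k := fun k => smul_nonneg (by positivity) (hb0 k)
  have hterm : ∀ k, (2 : ℝ) ^ k • b k ≤ (1 / 2 : ℝ) ^ k • e := fun k => by
    have := smul_le_smul_of_nonneg_left (hbe k) (by positivity : (0 : ℝ) ≤ 2 ^ k)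
    rwa [smul_smul, ← mul_pow, show (2 : ℝ) * (1 / 4) = 1 / 2 by norm_num] at this
  have hs : RUCauchy s e := ruCauchy_of_abs_sub_succ_le_geometric_two he fun k => by
    rw [hstep, abs_of_nonneg (hterm0 k)]; exact hterm k
  obtain ⟨u, f, hu⟩ := hcomp s ⟨e, hs⟩
  have hmono : Monotone s := monotone_nat_of_le_succ fun k => sub_nonneg.1 (hstep k ▸ hterm0 k)
  refine ⟨u, ⟨s, fun m => hY.toSubmodule.sum_mem fun k _ => hY.toSubmodule.smul_mem _ (hbY k),
    f, hu⟩, fun k => ?_⟩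
  have hle : (2 : ℝ) ^ k • b k ≤ u := calc
    (2 : ℝ) ^ k • b k = s (k + 1) - s k := (hstep k).symm
    _ ≤ s (k + 1) - s 0 := sub_le_sub_left (hmono k.zero_le) _
    _ ≤ u := by simpa [s] using hmono.le_of_ruTendsto harch hu (k + 1)
  have := smul_le_smul_of_nonneg_left hle (by positivity : (0 : ℝ) ≤ (1 / 2) ^ k)
  rwa [smul_smul, ← mul_pow, show (1 / 2 : ℝ) * 2 = 1 by norm_num, one_pow, one_smul] at this

end

theorem ru_limit_lies_in_adherence_with_regulator_in_adherence
    {X : Type*} [Lattice X] [AddCommGroup X] [Module ℝ X]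
    [CovariantClass X X (· + ·) (· ≤ ·)] [PosSMulMono ℝ X]
    (harch : VLArchimedean X) (hcomp : RUComplete X)
    {Y : Set X} (hY : IsVLSublattice Y)
    (x : ℕ → X) (hx : ∀ k, x k ∈ Y)
    {l : X} (h : ∃ e, RUTendsto x l e) :
    l ∈ uAdh Y ∧ ∃ e ∈ uAdh Y, RUTendsto x l e := by
  obtain ⟨e, he⟩ := h
  refine ⟨⟨x, hx, e, he⟩, ?_⟩
  obtain ⟨n, hn, b, hbY, hbe, hosc⟩ := he.exists_strictMono_oscillation_le hY hx
  have hnk : ∀ k, n k ≤ n (k + 1) := fun k => hn.monotone k.le_succ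
  have hb0 : ∀ k, 0 ≤ b k := fun k => (abs_nonneg _).trans (hosc k _ le_rfl (hnk k))
  obtain ⟨u, huY, hbu⟩ := hY.exists_mem_uAdh_forall_le_half_pow_smul harch hcomp he.1 hbY hb0 hbe
  have hu : 0 ≤ u := (hb0 0).trans (by simpa using hbu 0)
  have hsub : ∀ k, |x (n k) - l| ≤ (2 * (1 / 2 : ℝ) ^ k) • u :=
    abs_sub_le_of_ruTendsto_of_abs_sub_succ_le_geometric_two harch (he.comp_strictMono hn) hu
      fun k => (hosc k _ (hnk k) le_rfl).trans (hbu k)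
  refine ⟨u, huY, RUTendsto.of_forall_le_lt_succ hu hn (tendsto_const_mul_half_pow 3)
    fun k m hkm hmk => ?_⟩
  calc |x m - l| ≤ |x m - x (n k)| + |x (n k) - l| := abs_sub_le_abs_sub_add_abs_sub _ _ _
    _ ≤ (1 / 2 : ℝ) ^ k • u + (2 * (1 / 2 : ℝ) ^ k) • u :=
        add_le_add ((hosc k m hkm hmk.le).trans (hbu k)) (hsub k)
    _ = (3 * (1 / 2 : ℝ) ^ k) • u := by rw [← add_smul]; ring_nf
end

section
/- Relative uniform convergence of sequences passes down from a relatively uniformly complete Archimedean vector lattice X to any uniformly closed sublattice Y: if a sequence in Y converges relatively uniformly in X to y ∈ Y, it converges relatively uniformly in Y. -/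
open Filter Set

private lemma sum_le_sum_aux {X : Type*} [AddCommGroup X] [PartialOrder X]
    [CovariantClass X X (· + ·) (· ≤ ·)] {ι : Type*} {s : Finset ι} {f g : ι → X}
    (h : ∀ i ∈ s, f i ≤ g i) : ∑ i ∈ s, f i ≤ ∑ i ∈ s, g i := by
  classical
  induction s using Finset.cons_induction with
  | empty => simp
  | cons a s ha ih =>
      rw [Finset.sum_cons, Finset.sum_cons]
      exact add_le_add (h a (Finset.mem_cons_self a s))
        (ih fun i hi => h i (Finset.mem_cons_of_mem hi))

private lemma sum_nonneg_aux {X : Type*} [AddCommGroup X] [PartialOrder X]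
    [CovariantClass X X (· + ·) (· ≤ ·)] {ι : Type*} {s : Finset ι} {f : ι → X}
    (h : ∀ i ∈ s, 0 ≤ f i) : (0:X) ≤ ∑ i ∈ s, f i := by
  have := sum_le_sum_aux (f := fun _ => (0:X)) (g := f) (s := s) h
  simpa using this

private lemma smul_le_smul_right_aux {X : Type*} [Lattice X] [AddCommGroup X] [Module ℝ X]
    [CovariantClass X X (· + ·) (· ≤ ·)] [PosSMulMono ℝ X]
    {a b : ℝ} (hab : a ≤ b) {v : X} (hv : 0 ≤ v) : a • v ≤ b • v := by
  have h : (0:X) ≤ (b - a) • v := smul_nonneg (by linarith) hv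
  calc a • v ≤ a • v + (b - a) • v := le_add_of_nonneg_right h
    _ = b • v := by rw [← add_smul]; ring_nf

theorem ru_convergence_passes_down_to_uniformly_closed_sublattice
    {X : Type*} [Lattice X] [AddCommGroup X] [Module ℝ X]
    [CovariantClass X X (· + ·) (· ≤ ·)] [PosSMulMono ℝ X]
    (harch : VLArchimedean X) (hcomp : RUComplete X)
    {Y : Set X} (hY : IsVLSublattice Y) (hcl : RUClosed Y)
    (x : ℕ → X) (hx : ∀ n, x n ∈ Y) {y : X} (hy : y ∈ Y)
    (h : ∃ e, RUTendsto x y e) :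
    ∃ e ∈ Y, RUTendsto x y e := by
  classical
  obtain ⟨hY0, hYadd, hYsmul, hYsup⟩ := hY
  obtain ⟨e, he0, he⟩ := h
  set d : ℕ → X := fun n => |x n - y| with hd
  have hdY : ∀ n, d n ∈ Y := by
    intro n
    have hxy : x n - y ∈ Y := by
      have := hYadd _ (hx n) _ (hYsmul (-1) _ hy)
      simpa [sub_eq_add_neg, neg_one_smul] using this
    have hneg : -(x n - y) ∈ Y := by simpa [neg_one_smul] using hYsmul (-1) _ hxy
    have := hYsup _ hxy _ hneg
    simpa [hd, abs] using this
  have hd0 : ∀ n, (0:X) ≤ d n := fun n => abs_nonneg _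
  -- choose indices
  have hNex : ∀ j : ℕ, ∃ N, ∀ n ≥ N, d n ≤ ((1/4:ℝ)^j) • e := fun j =>
    he ((1/4:ℝ)^j) (by positivity)
  choose N₀ hN₀ using hNex
  -- strictly increasing indices
  let M : ℕ → ℕ := fun j => Nat.rec (N₀ 0) (fun j ih => max (N₀ (j+1)) (ih + 1)) j
  have hM0 : M 0 = N₀ 0 := rfl
  have hMsucc : ∀ j, M (j+1) = max (N₀ (j+1)) (M j + 1) := fun j => rfl
  have hMN : ∀ j, N₀ j ≤ M j := by
    intro j; cases j with
    | zero => simp [hM0]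
    | succ j => rw [hMsucc]; exact le_max_left _ _
  have hMmono : StrictMono M := by
    apply strictMono_nat_of_lt_succ
    intro j
    rw [hMsucc]
    exact lt_of_lt_of_le (Nat.lt_succ_self _) (le_max_right _ _)
  have hMle : ∀ j, ∀ n ≥ M j, d n ≤ ((1/4:ℝ)^j) • e := by
    intro j n hn
    exact hN₀ j n (le_trans (hMN j) hn)
  -- block suprema
  have hIccne : ∀ j, (Finset.Icc (M j) (M (j+1))).Nonempty := by
    intro j
    exact ⟨M j, Finset.mem_Icc.2 ⟨le_rfl, (hMmono (Nat.lt_succ_self j)).le⟩⟩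
  let u : ℕ → X := fun j => (Finset.Icc (M j) (M (j+1))).sup' (hIccne j) d
  have huY : ∀ j, u j ∈ Y := by
    intro j
    exact Finset.sup'_induction _ _ (fun a ha b hb => hYsup _ ha _ hb) (fun b _ => hdY b)
  have hu_le : ∀ j, u j ≤ ((1/4:ℝ)^j) • e := by
    intro j
    exact Finset.sup'_le _ _ fun n hn => hMle j n (Finset.mem_Icc.1 hn).1
  have hu0 : ∀ j, (0:X) ≤ u j := by
    intro j
    exact le_trans (hd0 (M j)) (Finset.le_sup' d (Finset.mem_Icc.2
      ⟨le_rfl, (hMmono (Nat.lt_succ_self j)).le⟩))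
  -- partial sums
  let s : ℕ → X := fun k => ∑ j ∈ Finset.range k, (2:ℝ)^j • u j
  have hterm0 : ∀ j, (0:X) ≤ (2:ℝ)^j • u j := fun j => smul_nonneg (by positivity) (hu0 j)
  have hterm_le : ∀ j, (2:ℝ)^j • u j ≤ ((1/2:ℝ)^j) • e := by
    intro j
    calc (2:ℝ)^j • u j ≤ (2:ℝ)^j • (((1/4:ℝ)^j) • e) :=
          smul_le_smul_of_nonneg_left (hu_le j) (by positivity)
      _ = ((1/2:ℝ)^j) • e := by
          rw [smul_smul, ← mul_pow]; norm_num
  have hsY : ∀ k, s k ∈ Y := by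
    intro k
    induction k with
    | zero => simpa [s] using hY0
    | succ k ih =>
        have : s (k+1) = s k + (2:ℝ)^k • u k := Finset.sum_range_succ _ _
        rw [this]
        exact hYadd _ ih _ (hYsmul _ _ (huY k))
  have hs0 : ∀ k, (0:X) ≤ s k := fun k => by
    show (0:X) ≤ ∑ j ∈ Finset.range k, (2:ℝ)^j • u j
    exact sum_nonneg_aux fun j _ => hterm0 j
  have hs_sub : ∀ m k, m ≤ k → s k - s m = ∑ j ∈ Finset.Ico m k, (2:ℝ)^j • u j := by
    intro m k hmk
    rw [Finset.sum_Ico_eq_sub _ hmk]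
  have hs_mono : Monotone s := by
    apply monotone_nat_of_le_succ
    intro k
    have : s (k+1) = s k + (2:ℝ)^k • u k := Finset.sum_range_succ _ _
    rw [this]
    exact le_add_of_nonneg_right (hterm0 k)
  have hgeo : ∀ m k : ℕ, (∑ j ∈ Finset.Ico m k, ((1/2:ℝ))^j) ≤ 2 * (1/2:ℝ)^m := by
    intro m k
    have := geom_sum_Ico_le_of_lt_one (x := (1/2:ℝ)) (by norm_num) (by norm_num) (m := m) (n := k)
    calc (∑ j ∈ Finset.Ico m k, ((1/2:ℝ))^j) ≤ (1/2:ℝ)^m / (1 - 1/2) := this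
      _ = 2 * (1/2:ℝ)^m := by ring
  have hdiff_le : ∀ m k : ℕ, m ≤ k → s k - s m ≤ (2 * (1/2:ℝ)^m) • e := by
    intro m k hmk
    rw [hs_sub m k hmk]
    calc (∑ j ∈ Finset.Ico m k, (2:ℝ)^j • u j)
        ≤ ∑ j ∈ Finset.Ico m k, ((1/2:ℝ)^j) • e := sum_le_sum_aux fun j _ => hterm_le j
      _ = (∑ j ∈ Finset.Ico m k, ((1/2:ℝ))^j) • e := by rw [Finset.sum_smul]
      _ ≤ (2 * (1/2:ℝ)^m) • e := smul_le_smul_right_aux (hgeo m k) he0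
  -- s is RU-Cauchy with regulator e
  have hcau : RUCauchy s e := by
    refine ⟨he0, ?_⟩
    intro ε hε
    obtain ⟨K, hK⟩ := exists_pow_lt_of_lt_one (half_pos hε) (show (1/2:ℝ) < 1 by norm_num)
    refine ⟨K, ?_⟩
    have key : ∀ p q : ℕ, K ≤ p → p ≤ q → |s q - s p| ≤ ε • e := by
      intro p q hKp hpq
      have h1 : |s q - s p| = s q - s p := abs_of_nonneg (sub_nonneg.2 (hs_mono hpq))
      rw [h1]
      refine le_trans (hdiff_le p q hpq) (smul_le_smul_right_aux ?_ he0)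
      have h2 : (1/2:ℝ)^p ≤ (1/2:ℝ)^K :=
        pow_le_pow_of_le_one (by norm_num) (by norm_num) hKp
      nlinarith
    intro n hn m hm
    rcases le_total m n with hmn | hmn
    · exact key m n hm hmn
    · rw [abs_sub_comm]; exact key n m hn hmn
  -- completeness gives a limit
  obtain ⟨l, f, hf0, hf⟩ := hcomp s ⟨e, hcau⟩
  have hlY : l ∈ Y := hcl ⟨s, hsY, f, hf0, hf⟩
  -- s k ≤ l for all k
  have hs_le : ∀ k, s k ≤ l := by
    intro k
    have key : ∀ n : ℕ, n • (s k - l) ≤ f := by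
      intro n
      cases n with
      | zero => simpa using hf0
      | succ n =>
          have hpos : (0:ℝ) < 1/(n+1:ℝ) := by positivity
          obtain ⟨K, hK⟩ := hf (1/(n+1:ℝ)) hpos
          set m := max k K with hm
          have h1 : |s m - l| ≤ (1/(n+1:ℝ)) • f := hK m (le_max_right _ _)
          have h2 : s m - l ≤ (1/(n+1:ℝ)) • f := le_trans (le_abs_self _) h1
          have h3 : s k - l ≤ (1/(n+1:ℝ)) • f := by
            have := hs_mono (le_max_left k K)
            calc s k - l ≤ s m - l := by simpa using sub_le_sub_right this l
              _ ≤ _ := h2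
          have h4 : ((n+1:ℕ):ℝ) • (s k - l) ≤ ((n+1:ℕ):ℝ) • ((1/(n+1:ℝ)) • f) :=
            smul_le_smul_of_nonneg_left h3 (by positivity)
          have h5 : ((n+1:ℕ):ℝ) • ((1/(n+1:ℝ)) • f) = f := by
            rw [smul_smul]
            push_cast
            rw [mul_one_div_cancel (by positivity), one_smul]
          rw [h5] at h4
          calc (n+1) • (s k - l) = ((n+1:ℕ):ℝ) • (s k - l) :=
                (Nat.cast_smul_eq_nsmul ℝ _ _).symm
            _ ≤ f := h4
    have := harch (s k - l) f key
    exact sub_nonpos.1 this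
  have hl0 : (0:X) ≤ l := le_trans (hs0 0) (hs_le 0)
  -- u j ≤ (1/2)^j • l
  have hu_le' : ∀ j, u j ≤ ((1/2:ℝ)^j) • l := by
    intro j
    have h1 : (2:ℝ)^j • u j ≤ l := by
      have h2 : s j + (2:ℝ)^j • u j = s (j+1) := (Finset.sum_range_succ _ _).symm
      calc (2:ℝ)^j • u j ≤ s j + (2:ℝ)^j • u j := le_add_of_nonneg_left (hs0 j)
        _ = s (j+1) := h2
        _ ≤ l := hs_le (j+1)
    calc u j = ((1/2:ℝ)^j) • ((2:ℝ)^j • u j) := by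
          rw [smul_smul, ← mul_pow]; norm_num
      _ ≤ ((1/2:ℝ)^j) • l := smul_le_smul_of_nonneg_left h1 (by positivity)
  -- conclude
  refine ⟨l, hlY, hl0, ?_⟩
  intro ε hε
  obtain ⟨J, hJ⟩ := exists_pow_lt_of_lt_one hε (show (1/2:ℝ) < 1 by norm_num)
  refine ⟨M J, ?_⟩
  intro n hn
  have hJn : J ≤ n := le_trans hMmono.le_apply hn
  obtain ⟨i, hPi, hiJ, hn2⟩ : ∃ i, M i ≤ n ∧ J ≤ i ∧ n ≤ M (i+1) := by
    haveI : DecidablePred (fun i => M i ≤ n) := fun i => Nat.decLe _ _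
    refine ⟨Nat.findGreatest (fun i => M i ≤ n) n, ?_, ?_, ?_⟩
    · exact Nat.findGreatest_spec (P := fun i => M i ≤ n) hJn hn
    · exact Nat.le_findGreatest (P := fun i => M i ≤ n) hJn hn
    · by_contra h'
      push_neg at h'
      have hP1 : M (Nat.findGreatest (fun i => M i ≤ n) n + 1) ≤ n := h'.le
      have hle : Nat.findGreatest (fun i => M i ≤ n) n + 1 ≤ n :=
        le_trans hMmono.le_apply hP1
      exact Nat.findGreatest_is_greatest (P := fun i => M i ≤ n) (Nat.lt_succ_self _) hle hP1
  have hmem : n ∈ Finset.Icc (M i) (M (i+1)) := Finset.mem_Icc.2 ⟨hPi, hn2⟩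
  calc |x n - y| = d n := rfl
    _ ≤ u i := Finset.le_sup' d hmem
    _ ≤ ((1/2:ℝ)^i) • l := hu_le' i
    _ ≤ ((1/2:ℝ)^J) • l := smul_le_smul_right_aux
        (pow_le_pow_of_le_one (by norm_num) (by norm_num) hiJ) hl0
    _ ≤ ε • l := smul_le_smul_right_aux hJ.le hl0
end

section
/- Let X be an Archimedean vector lattice with the σ-property (every countable subset lies in a principal ideal). Then the uniform adherence of X in its Dedekind completion X^δ equals the uniform closure of X in X^δ. -/
open Filter Set

/-!
The uniform adherence is always contained in the uniform closure, so it suffices to show that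
the adherence of `X` is itself uniformly closed. Let `y k → l` uniformly, where each `y k` is the
uniform limit of a sequence from `X` with its own regulator `e k`. Majorizing the `e k` by
elements of `X` and applying the σ-property puts all of them into one principal ideal `I_U`, so
`U` is a common regulator for all these sequences. A diagonal sequence, taken `1/(k+1)`-close to
`y k` with respect to `U`, then converges to `l` with regulator `U + e`.
-/

section Adherence

variable {D : Type*} [Lattice D] [AddCommGroup D] [Module ℝ D]

def HasSigmaProperty (X : Set D) : Prop :=
  ∀ f : ℕ → D, (∀ n, f n ∈ X) → ∃ u ∈ X, 0 ≤ u ∧ ∀ n, ∃ c : ℝ, |f n| ≤ c • u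

theorem subset_uAdh (A : Set D) : A ⊆ uAdh A :=
  fun x hx => ⟨fun _ => x, fun _ => hx, 0, le_rfl, fun _ _ => ⟨0, fun _ _ => by simp [abs]⟩⟩

theorem uAdh_mono {A B : Set D} (h : A ⊆ B) : uAdh A ⊆ uAdh B :=
  fun _ ⟨x, hx, e, hxe⟩ => ⟨x, fun n => h (hx n), e, hxe⟩

theorem uAdh_subset_uClosure (A : Set D) : uAdh A ⊆ uClosure A :=
  fun _ hl _ ⟨hAB, hB⟩ => hB (uAdh_mono hAB hl)

theorem uAdh_eq_uClosure_of_ruClosed {A : Set D} (h : RUClosed (uAdh A)) :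
    uAdh A = uClosure A :=
  (uAdh_subset_uClosure A).antisymm (sInter_subset_of_mem ⟨subset_uAdh A, h⟩)

theorem exists_common_regulator_of_hasSigmaProperty {X : Set D} (hmaj : Majorizing X)
    (hσ : HasSigmaProperty X) (e : ℕ → D) (he : ∀ k, 0 ≤ e k) :
    ∃ U, 0 ≤ U ∧ ∀ k, ∃ c : ℝ, e k ≤ c • U := by
  choose u huX heu using fun k => hmaj (e k) (he k)
  obtain ⟨U, -, hU, hc⟩ := hσ u huX
  refine ⟨U, hU, fun k => ?_⟩
  obtain ⟨c, hc⟩ := hc k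
  exact ⟨c, (heu k).trans ((le_abs_self _).trans hc)⟩

end Adherence

section Regulators

variable {D : Type*} [Lattice D] [AddCommGroup D] [Module ℝ D] [AddLeftMono D]

theorem RUTendsto.add {x y : ℕ → D} {l m e f : D} (hx : RUTendsto x l e)
    (hy : RUTendsto y m f) : RUTendsto (x + y) (l + m) (e + f) := by
  refine ⟨add_nonneg hx.1 hy.1, fun ε hε => ?_⟩
  obtain ⟨N₁, hN₁⟩ := hx.2 ε hε
  obtain ⟨N₂, hN₂⟩ := hy.2 ε hε
  refine ⟨max N₁ N₂, fun n hn => ?_⟩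
  calc |(x + y) n - (l + m)| = |(x n - l) + (y n - m)| := by
        rw [Pi.add_apply, add_sub_add_comm]
    _ ≤ |x n - l| + |y n - m| := abs_add_le _ _
    _ ≤ ε • e + ε • f :=
        add_le_add (hN₁ n (le_of_max_le_left hn)) (hN₂ n (le_of_max_le_right hn))
    _ = ε • (e + f) := (smul_add ε e f).symm

variable [PosSMulMono ℝ D]

theorem smul_le_smul_of_nonneg_right' {c c' : ℝ} {u : D} (h : c ≤ c') (hu : 0 ≤ u) :
    c • u ≤ c' • u :=
  sub_nonneg.1 (by rw [← sub_smul]; exact smul_nonneg (sub_nonneg.2 h) hu)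

theorem RUTendsto.of_le_smul {x : ℕ → D} {l e U : D} {c : ℝ} (hx : RUTendsto x l e)
    (hU : 0 ≤ U) (he : e ≤ c • U) : RUTendsto x l U := by
  refine ⟨hU, fun ε hε => ?_⟩
  have hc : 0 < max c 1 := lt_max_of_lt_right one_pos
  obtain ⟨N, hN⟩ := hx.2 (ε / max c 1) (div_pos hε hc)
  refine ⟨N, fun n hn => ?_⟩
  calc |x n - l| ≤ (ε / max c 1) • e := hN n hn
    _ ≤ (ε / max c 1) • (max c 1 • U) := by
        gcongr
        exact he.trans (smul_le_smul_of_nonneg_right' (le_max_left c 1) hU)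
    _ = ε • U := by rw [smul_smul, div_mul_cancel₀ ε hc.ne']

theorem ruTendsto_zero_of_abs_le_one_div_succ {w : ℕ → D} {U : D} (hU : 0 ≤ U)
    (hw : ∀ k, |w k| ≤ (1 / ((k : ℝ) + 1)) • U) : RUTendsto w 0 U := by
  refine ⟨hU, fun ε hε => ?_⟩
  obtain ⟨K, hK⟩ := exists_nat_one_div_lt hε
  refine ⟨K, fun k hk => ?_⟩
  have hkε : 1 / ((k : ℝ) + 1) ≤ ε :=
    (one_div_le_one_div_of_le (by positivity) (by exact_mod_cast Nat.succ_le_succ hk)).trans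
      hK.le
  rw [sub_zero]
  exact (hw k).trans (smul_le_smul_of_nonneg_right' hkε hU)

theorem ruClosed_uAdh_of_exists_common_regulator
    (hreg : ∀ e : ℕ → D, (∀ k, 0 ≤ e k) → ∃ U, 0 ≤ U ∧ ∀ k, ∃ c : ℝ, e k ≤ c • U)
    (A : Set D) : RUClosed (uAdh A) := by
  rintro l ⟨y, hy, e, hyl⟩
  choose x hxA e' hxy using hy
  obtain ⟨U, hU, hc⟩ := hreg e' fun k => (hxy k).1
  choose c hc using hc
  have hxyU : ∀ k, RUTendsto (x k) (y k) U := fun k => (hxy k).of_le_smul hU (hc k)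
  have hclose : ∀ k, ∃ n, |x k n - y k| ≤ (1 / ((k : ℝ) + 1)) • U := fun k => by
    obtain ⟨N, hN⟩ := (hxyU k).2 (1 / ((k : ℝ) + 1)) (by positivity)
    exact ⟨N, hN N le_rfl⟩
  choose n hn using hclose
  have hdiag := (ruTendsto_zero_of_abs_le_one_div_succ hU hn).add hyl
  have hsum : (fun k => x k (n k) - y k) + y = fun k => x k (n k) :=
    funext fun k => sub_add_cancel _ _
  rw [hsum, zero_add] at hdiag
  exact ⟨fun k => x k (n k), fun k => hxA k (n k), U + e, hdiag⟩

end Regulators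

theorem sigma_property_implies_adherence_eq_closure_in_dedekind_completion_general
    {D : Type*} [Lattice D] [AddCommGroup D] [Module ℝ D]
    [CovariantClass D D (· + ·) (· ≤ ·)] [PosSMulMono ℝ D]
    {X : Set D} (hmaj : Majorizing X)
    (hsigma : ∀ f : ℕ → D, (∀ n, f n ∈ X) →
      ∃ u ∈ X, 0 ≤ u ∧ ∀ n, ∃ c : ℝ, |f n| ≤ c • u) :
    uAdh X = uClosure X :=
  uAdh_eq_uClosure_of_ruClosed <|
    ruClosed_uAdh_of_exists_common_regulator
      (exists_common_regulator_of_hasSigmaProperty hmaj hsigma) X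

theorem sigma_property_implies_adherence_eq_closure_in_dedekind_completion
    {D : Type*} [Lattice D] [AddCommGroup D] [Module ℝ D]
    [CovariantClass D D (· + ·) (· ≤ ·)] [PosSMulMono ℝ D]
    (harch : VLArchimedean D)
    (hD : ∀ S : Set D, S.Nonempty → BddAbove S → ∃ a, IsLUB S a)
    {X : Set D} (hX : IsVLSublattice X) (hmaj : Majorizing X)
    (hdense : ∀ d : D, 0 < d → ∃ x ∈ X, 0 < x ∧ x ≤ d)
    (hsigma : ∀ f : ℕ → D, (∀ n, f n ∈ X) →
      ∃ u ∈ X, 0 ≤ u ∧ ∀ n, ∃ c : ℝ, |f n| ≤ c • u) :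
    uAdh X = uClosure X :=
  sigma_property_implies_adherence_eq_closure_in_dedekind_completion_general hmaj hsigma
end

section
/- If an Archimedean vector lattice X is complete with respect to σ-order convergence (every σ-order Cauchy net converges σ-order), then X is relatively uniformly complete. -/
open Filter Set

/-- σ-order convergence of a net. -/
def SigmaOrderTendstoNet {X : Type*} [Lattice X] [AddCommGroup X]
    {ι : Type*} [Preorder ι] (x : ι → X) (l : X) : Prop :=
  ∃ z : ℕ → X, Antitone z ∧ IsGLB (Set.range z) 0 ∧
    ∀ n, ∃ α₀, ∀ α ≥ α₀, |x α - l| ≤ z n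

/-- σ-order Cauchy net. -/
def SigmaOrderCauchyNet {X : Type*} [Lattice X] [AddCommGroup X]
    {ι : Type*} [Preorder ι] (x : ι → X) : Prop :=
  ∃ z : ℕ → X, Antitone z ∧ IsGLB (Set.range z) 0 ∧
    ∀ n, ∃ α₀, ∀ α ≥ α₀, ∀ β ≥ α₀, |x α - x β| ≤ z n

/-!
An `e`-uniformly Cauchy net is σ-order Cauchy with respect to the sequence `(n + 1)⁻¹ • e`,
which decreases to `0` precisely because `X` is Archimedean. If `l` is a σ-order limit, witnessed
by `w n ↓ 0`, then `|x α - l| ≤ ε • e + w n` for every `n` as soon as `α` is late enough, and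
taking the infimum over `n` gives `|x α - l| ≤ ε • e`.
-/

section RegulatorSequence

variable {X : Type*} [Lattice X] [AddCommGroup X] [Module ℝ X]
  [CovariantClass X X (· + ·) (· ≤ ·)] [PosSMulMono ℝ X] {e : X}

lemma antitone_inv_succ_smul (he : 0 ≤ e) : Antitone fun n : ℕ ↦ ((n : ℝ) + 1)⁻¹ • e := by
  intro m n hmn
  have hcoef : ((n : ℝ) + 1)⁻¹ ≤ ((m : ℝ) + 1)⁻¹ := by gcongr
  simpa only [sub_smul, sub_nonneg] using smul_nonneg (sub_nonneg.mpr hcoef) he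

lemma isGLB_range_inv_succ_smul (harch : VLArchimedean X) (he : 0 ≤ e) :
    IsGLB (range fun n : ℕ ↦ ((n : ℝ) + 1)⁻¹ • e) 0 := by
  refine ⟨forall_mem_range.2 fun n ↦ smul_nonneg (by positivity) he,
    fun b hb ↦ harch b e fun n ↦ ?_⟩
  cases n with
  | zero => simpa using he
  | succ k =>
    calc (k + 1) • b ≤ (k + 1) • (((k : ℝ) + 1)⁻¹ • e) := nsmul_le_nsmul_right (hb ⟨k, rfl⟩) _
      _ = e := by
        rw [← Nat.cast_smul_eq_nsmul ℝ, smul_smul, Nat.cast_succ,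
          mul_inv_cancel₀ (by positivity), one_smul]

lemma RUCauchyNet.sigmaOrderCauchyNet {ι : Type*} [Preorder ι] {x : ι → X}
    (harch : VLArchimedean X) (hx : RUCauchyNet x e) : SigmaOrderCauchyNet x :=
  ⟨_, antitone_inv_succ_smul hx.1, isGLB_range_inv_succ_smul harch hx.1,
    fun _ ↦ hx.2 _ (by positivity)⟩

end RegulatorSequence

lemma le_of_forall_le_add_of_isGLB_zero {X κ : Type*} [Lattice X] [AddCommGroup X]
    [CovariantClass X X (· + ·) (· ≤ ·)] {w : κ → X} (hw : IsGLB (range w) 0) {a c : X}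
    (h : ∀ k, a ≤ c + w k) : a ≤ c :=
  sub_nonpos.mp <| hw.2 <| forall_mem_range.2 fun k ↦ sub_le_iff_le_add'.mpr (h k)

lemma RUCauchyNet.ruTendstoNet_of_sigmaOrderTendstoNet {X ι : Type*} [Lattice X]
    [AddCommGroup X] [Module ℝ X] [CovariantClass X X (· + ·) (· ≤ ·)] [Preorder ι]
    [IsDirected ι (· ≤ ·)] {x : ι → X} {l e : X} (hx : RUCauchyNet x e)
    (hl : SigmaOrderTendstoNet x l) : RUTendstoNet x l e := by
  obtain ⟨w, -, hw, hxw⟩ := hl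
  refine ⟨hx.1, fun ε hε ↦ ?_⟩
  obtain ⟨α₀, hα₀⟩ := hx.2 ε hε
  refine ⟨α₀, fun α hα ↦ le_of_forall_le_add_of_isGLB_zero hw fun n ↦ ?_⟩
  obtain ⟨β₀, hβ₀⟩ := hxw n
  obtain ⟨β, hαβ, hβ⟩ := directed_of (· ≤ ·) α₀ β₀
  calc |x α - l| = |(x α - x β) + (x β - l)| := by rw [sub_add_sub_cancel]
    _ ≤ |x α - x β| + |x β - l| := abs_add_le _ _
    _ ≤ ε • e + w n := add_le_add (hα₀ α hα β hαβ) (hβ₀ β hβ)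

universe u

theorem sigma_order_complete_implies_ru_complete
    {X : Type*} [Lattice X] [AddCommGroup X] [Module ℝ X]
    [CovariantClass X X (· + ·) (· ≤ ·)] [PosSMulMono ℝ X]
    (harch : VLArchimedean X)
    (hcomp : ∀ {ι : Type u} [Preorder ι] [Nonempty ι] [IsDirected ι (· ≤ ·)]
      (x : ι → X), SigmaOrderCauchyNet x → ∃ l, SigmaOrderTendstoNet x l) :
    ∀ {ι : Type u} [Preorder ι] [Nonempty ι] [IsDirected ι (· ≤ ·)]
      (x : ι → X), (∃ e, RUCauchyNet x e) → ∃ l e, RUTendstoNet x l e := by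
  intro ι _ _ _ x ⟨e, hx⟩
  obtain ⟨l, hl⟩ := hcomp x (hx.sigmaOrderCauchyNet harch)
  exact ⟨l, e, hx.ruTendstoNet_of_sigmaOrderTendstoNet hl⟩
end

section
/- Let P = [0,1] \ ℚ and let X be the sublattice of C(P) given by X = C[0,1]|_P + span{ f_r : r ∈ [0,1] ∩ ℚ }, where f_r(t) = 1/|t − r|. Then X is a sublattice of C(P), i.e. closed under the lattice operations. -/
open Filter Set

noncomputable section BallHager

/-- The irrationals of `[0,1]`. -/
def Pset : Set ℝ := {t | t ∈ Set.Icc (0 : ℝ) 1 ∧ Irrational t}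

/-- For a rational `r`, the function `t ↦ 1/|t − r|`, continuous on `Pset`. -/
def fr (r : ℚ) : C(Pset, ℝ) :=
  ⟨fun t => 1 / |(t : ℝ) - (r : ℝ)|, by
    apply Continuous.div continuous_const
    · exact (continuous_subtype_val.sub continuous_const).abs
    · intro t
      simp only [ne_eq, abs_eq_zero, sub_eq_zero]
      exact fun h => t.2.2 ⟨r, h.symm⟩⟩

/-- Restriction of a continuous function on `[0,1]` to `Pset`. -/
def restrictP (v : C(Set.Icc (0 : ℝ) 1, ℝ)) : C(Pset, ℝ) :=
  v.comp ⟨fun t => ⟨(t : ℝ), t.2.1⟩, Continuous.subtype_mk continuous_subtype_val _⟩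

/-- The Ball–Hager sublattice `X = C[0,1]|_P + span{f_r : r ∈ [0,1] ∩ ℚ}`. -/
def XBH : Set C(Pset, ℝ) :=
  {g | ∃ v : C(Set.Icc (0 : ℝ) 1, ℝ), ∃ c : ℚ →₀ ℝ,
    (∀ r ∈ c.support, (r : ℝ) ∈ Set.Icc (0 : ℝ) 1) ∧
    g = restrictP v + c.sum fun r a => a • fr r}

/-! The space is a linear subspace, and `g ⊔ h = (g - h) ⊔ 0 + h`, so it suffices to show that
positive parts stay in it. For `g = v + ∑ a_s f_s`, on the irrationals
`g ⊔ 0 = max (v - ∑ (a_s)⁻ f_s) (-∑ (a_s)⁺ f_s) + ∑ (a_s)⁺ f_s`,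
and the maximum extends continuously to `[0,1]`: at each rational `s` with `a_s ≠ 0` exactly one
of its two arguments tends to `-∞`, while the other is continuous at `s`. -/

open scoped Topology

section ContinuousExtension

variable {α β : Type*} [TopologicalSpace α] [TopologicalSpace β]

theorem exists_continuousMap_eqOn_compl_of_finite [T1Space α] {D : Set α} (hD : D.Finite)
    {F : α → β} (hF : ∀ x ∉ D, ContinuousAt F x)
    (hlim : ∀ x ∈ D, ∃ y, Tendsto F (𝓝[≠] x) (𝓝 y)) :
    ∃ G : C(α, β), EqOn G F Dᶜ := by
  classical
  choose g hg using hlim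
  have hoff : ∀ x, ∀ᶠ y in 𝓝[≠] x, y ∉ D := fun x => by
    filter_upwards [hD.eventually_all.2 fun d _ =>
      if hd : x = d then hd ▸ self_mem_nhdsWithin else eventually_ne_nhdsWithin hd]
      with y hy hyD using hy y hyD rfl
  set G : α → β := fun x => if hx : x ∈ D then g x hx else F x
  have hGF : EqOn G F Dᶜ := fun x hx => dif_neg hx
  refine ⟨⟨G, continuous_iff_continuousAt.2 fun x => ?_⟩, hGF⟩
  rw [continuousAt_iff_punctured_nhds]
  refine Tendsto.congr' ((hoff x).mono fun y hy => (hGF hy).symm) ?_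
  by_cases hx : x ∈ D
  · simpa [G, hx] using hg x hx
  · simpa [G, hx] using (hF x hx).tendsto.mono_left nhdsWithin_le_nhds

end ContinuousExtension

theorem Filter.Tendsto.max_of_tendsto_atBot_right {ι β : Type*} [LinearOrder β]
    [TopologicalSpace β] [OrderTopology β] [NoMinOrder β] {l : Filter ι} {f g : ι → β} {b : β}
    (hf : Tendsto f l (𝓝 b)) (hg : Tendsto g l atBot) :
    Tendsto (fun x => max (f x) (g x)) l (𝓝 b) := by
  obtain ⟨b', hb'⟩ := exists_lt b
  refine hf.congr' ?_
  filter_upwards [hf.eventually (eventually_gt_nhds hb'), hg.eventually (eventually_le_atBot b')]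
    with x hfx hgx using (max_eq_left (hgx.trans hfx.le)).symm

theorem tendsto_inv_abs_sub_nhdsNE (r : ℝ) :
    Tendsto (fun t : ℝ => |t - r|⁻¹) (𝓝[≠] r) atTop :=
  (tendsto_norm_sub_self_nhdsNE r).inv_tendsto_nhdsGT_zero

-- At `t = s` the `s`-th term is the junk value `d s / 0 = 0`.
def kernelSum (S : Finset ℚ) (d : ℚ → ℝ) (t : ℝ) : ℝ := ∑ s ∈ S, d s / |t - s|

section kernelSum

variable {S : Finset ℚ} {d : ℚ → ℝ}

theorem continuousAt_kernelSum {t : ℝ} (h : ∀ s ∈ S, d s ≠ 0 → t ≠ s) :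
    ContinuousAt (kernelSum S d) t := by
  refine tendsto_finsetSum S fun s hs => ?_
  by_cases hd : d s = 0
  · simp [hd]
  · exact continuousAt_const.div (continuous_abs.continuousAt.comp (continuousAt_id.sub
      continuousAt_const)) (abs_ne_zero.2 (sub_ne_zero.2 (h s hs hd)))

theorem continuousAt_kernelSum_of_eq_zero {s₀ : ℚ} (h : d s₀ = 0) :
    ContinuousAt (kernelSum S d) s₀ :=
  continuousAt_kernelSum fun s _ hd hs => hd (by rwa [← Rat.cast_injective hs])

theorem tendsto_kernelSum_atTop {s₀ : ℚ} (hs₀ : s₀ ∈ S) (hd : 0 < d s₀) :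
    Tendsto (kernelSum S d) (𝓝[≠] (s₀ : ℝ)) atTop := by
  have hsplit : kernelSum S d = fun t : ℝ => d s₀ * |t - s₀|⁻¹ + kernelSum (S.erase s₀) d t := by
    ext t
    rw [kernelSum, ← Finset.add_sum_erase _ _ hs₀, div_eq_mul_inv]
    rfl
  have hrest : ContinuousAt (kernelSum (S.erase s₀) d) s₀ :=
    continuousAt_kernelSum fun s hs _ h => Finset.ne_of_mem_erase hs (Rat.cast_injective h).symm
  rw [hsplit]
  exact ((tendsto_inv_abs_sub_nhdsNE _).const_mul_atTop hd).atTop_add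
    (hrest.tendsto.mono_left nhdsWithin_le_nhds)

theorem kernelSum_eq_posPart_sub_negPart (t : ℝ) :
    kernelSum S d t = kernelSum S (fun s => (d s)⁺) t - kernelSum S (fun s => (d s)⁻) t := by
  simp only [kernelSum, ← Finset.sum_sub_distrib, ← sub_div, posPart_sub_negPart]

end kernelSum

theorem finsuppSum_smul_fr_apply (c : ℚ →₀ ℝ) {S : Finset ℚ} (hS : c.support ⊆ S) (t : Pset) :
    (c.sum fun r a => a • fr r) t = kernelSum S c t := by
  rw [Finsupp.sum_of_support_subset c hS (fun r a => a • fr r) fun _ _ => zero_smul ℝ _]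
  simp [kernelSum, fr, div_eq_mul_inv]

theorem zero_mem_XBH : (0 : C(Pset, ℝ)) ∈ XBH :=
  ⟨0, 0, by simp, by ext; simp [restrictP]⟩

theorem add_mem_XBH {g h : C(Pset, ℝ)} (hg : g ∈ XBH) (hh : h ∈ XBH) : g + h ∈ XBH := by
  classical
  obtain ⟨v, b, hb, rfl⟩ := hg
  obtain ⟨w, d, hd, rfl⟩ := hh
  refine ⟨v + w, b + d, fun r hr => ?_, ?_⟩
  · rcases Finset.mem_union.1 (Finsupp.support_add hr) with hr | hr
    exacts [hb r hr, hd r hr]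
  · rw [Finsupp.sum_add_index' (fun r => zero_smul ℝ (fr r)) fun r α β => add_smul α β (fr r)]
    ext t
    simp only [restrictP, ContinuousMap.add_apply, ContinuousMap.comp_apply]
    ring

theorem smul_mem_XBH (k : ℝ) {g : C(Pset, ℝ)} (hg : g ∈ XBH) : k • g ∈ XBH := by
  obtain ⟨v, b, hb, rfl⟩ := hg
  refine ⟨k • v, k • b, fun r hr => hb r (Finsupp.support_smul hr), ?_⟩
  rw [Finsupp.sum_smul_index' fun r => zero_smul ℝ (fr r), smul_add, Finsupp.smul_sum]
  simp only [smul_smul]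
  rfl

theorem exists_continuousMap_eqOn_max_kernelSum {v : ℝ → ℝ} (hv : Continuous v)
    {S : Finset ℚ} {a : ℚ → ℝ} (ha : ∀ s ∈ S, a s ≠ 0) :
    ∃ G : C(ℝ, ℝ), EqOn G (fun t => max (v t - kernelSum S (fun s => (a s)⁻) t)
      (-kernelSum S (fun s => (a s)⁺) t)) (((↑) : ℚ → ℝ) '' S)ᶜ := by
  set A : ℝ → ℝ := fun t => v t - kernelSum S (fun s => (a s)⁻) t
  set B : ℝ → ℝ := fun t => -kernelSum S (fun s => (a s)⁺) t
  refine exists_continuousMap_eqOn_compl_of_finite (S.finite_toSet.image _) (fun x hx => ?_) ?_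
  · have hne : ∀ s ∈ S, x ≠ s := fun s hs h => hx ⟨s, hs, h.symm⟩
    exact (hv.continuousAt.sub (continuousAt_kernelSum fun s hs _ => hne s hs)).max
      (continuousAt_kernelSum fun s hs _ => hne s hs).neg
  rintro _ ⟨s, hs, rfl⟩
  rcases (ha s hs).lt_or_gt with hneg | hpos
  · have hB : ContinuousAt B s :=
      (continuousAt_kernelSum_of_eq_zero (posPart_eq_zero.2 hneg.le)).neg
    have hA : Tendsto A (𝓝[≠] (s : ℝ)) atBot :=
      ((hv.continuousAt.mono_left nhdsWithin_le_nhds).add_atBot (tendsto_neg_atTop_atBot.comp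
        (tendsto_kernelSum_atTop hs (negPart_pos hneg)))).congr fun t => (sub_eq_add_neg _ _).symm
    exact ⟨B s, ((hB.tendsto.mono_left nhdsWithin_le_nhds).max_of_tendsto_atBot_right hA).congr
      fun t => max_comm _ _⟩
  · have hA : ContinuousAt A s := hv.continuousAt.sub
      (continuousAt_kernelSum_of_eq_zero (negPart_eq_zero.2 hpos.le))
    have hB : Tendsto B (𝓝[≠] (s : ℝ)) atBot :=
      tendsto_neg_atTop_atBot.comp (tendsto_kernelSum_atTop hs (posPart_pos hpos))
    exact ⟨A s, (hA.tendsto.mono_left nhdsWithin_le_nhds).max_of_tendsto_atBot_right hB⟩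

theorem sup_zero_mem_XBH (v : C(Icc (0 : ℝ) 1, ℝ)) (a : ℚ →₀ ℝ)
    (ha : ∀ r ∈ a.support, (r : ℝ) ∈ Icc (0 : ℝ) 1) :
    (restrictP v + a.sum fun r α => α • fr r) ⊔ 0 ∈ XBH := by
  set v' : ℝ → ℝ := IccExtend zero_le_one v
  obtain ⟨G, hG⟩ := exists_continuousMap_eqOn_max_kernelSum v.continuous.Icc_extend'
    fun s (hs : s ∈ a.support) => Finsupp.mem_support_iff.1 hs
  refine ⟨G.restrict (Icc 0 1), a.mapRange (·⁺) posPart_zero,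
    fun r hr => ha r (Finsupp.support_mapRange hr), ?_⟩
  ext t
  have ht : (t : ℝ) ∉ ((↑) : ℚ → ℝ) '' a.support := fun ⟨s, _, hs⟩ => t.2.2 ⟨s, hs⟩
  have hv't : v' t = v ⟨t, t.2.1⟩ := IccExtend_of_mem zero_le_one v t.2.1
  rw [ContinuousMap.sup_apply, ContinuousMap.add_apply, ContinuousMap.add_apply,
    finsuppSum_smul_fr_apply a subset_rfl, finsuppSum_smul_fr_apply _ Finsupp.support_mapRange,
    kernelSum_eq_posPart_sub_negPart]
  change max (v ⟨t, t.2.1⟩ + _) 0 = G t + kernelSum a.support (fun s => (a s)⁺) t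
  rw [hG ht, ← max_add_add_right, ← hv't]
  congr 1 <;> ring

theorem XBH_is_sublattice : IsVLSublattice XBH := by
  refine ⟨zero_mem_XBH, fun _ hg _ hh => add_mem_XBH hg hh, fun k _ hg => smul_mem_XBH k hg,
    fun g hg h hh => ?_⟩
  obtain ⟨v, a, ha, hgh⟩ : g - h ∈ XBH := by
    simpa [sub_eq_add_neg] using add_mem_XBH hg (smul_mem_XBH (-1) hh)
  have hsup : g ⊔ h = (g - h) ⊔ 0 + h := by rw [sup_add, sub_add_cancel, zero_add]
  rw [hsup, hgh]
  exact add_mem_XBH (sup_zero_mem_XBH v a ha) hh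

end BallHager
end
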